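/- Let φ be a finite point set in ℝ^d contained in Q_n = [−n/2, n/2]^d, let Q_{z,m} = z + Q_m ⊆ ℝ^d, and suppose φ ⊄ Q_{z,m} and φ ∩ Q_{z,m} ≠ ∅. Let K ≥ m be minimal with φ ∩ Q_{z,K} ⊄ Q_{z,m} (assuming it exists). Then the MST total edge length satisfies H(φ) ≤ H(φ \ Q_{z,m}) + √d · K · #(φ ∩ Q_{z,m}). -/

import Mathlib

open Metric
open scoped Classical

/-- The length of an edge, as a function on unordered pairs. -/
noncomputable def edgeLength {d : ℕ} (e : Sym2 (EuclideanSpace ℝ (Fin d))) : ℝ :=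
  Sym2.lift ⟨fun a b => dist a b, fun a b => dist_comm a b⟩ e

/-- The total edge length of a minimal spanning tree on the finite point set `ψ`. -/
noncomputable def mstLength {d : ℕ} (ψ : Finset (EuclideanSpace ℝ (Fin d))) : ℝ :=
  sInf {L : ℝ | ∃ E : Finset (Sym2 (EuclideanSpace ℝ (Fin d))),
    (∀ e ∈ E, ∀ x, x ∈ e → x ∈ ψ) ∧
    (∀ x ∈ ψ, ∀ y ∈ ψ,
      (SimpleGraph.fromEdgeSet (E : Set (Sym2 (EuclideanSpace ℝ (Fin d))))).Reachable x y) ∧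
    E.card = ψ.card - 1 ∧
    L = ∑ e ∈ E, edgeLength e}

/-- The cube `Q_{z,m} = z + [−m/2, m/2]^d`. -/
def cube {d : ℕ} (m : ℝ) (z : EuclideanSpace ℝ (Fin d)) : Set (EuclideanSpace ℝ (Fin d)) :=
  {x | ∀ i, |x i - z i| ≤ m / 2}

/-! A minimal spanning tree on `φ` costs at most a spanning tree on `φ \ Q_{z,m}` plus a star
joining every point of `φ ∩ Q_{z,m}` to a point `x₀ ∈ φ ∩ Q_{z,K}` outside `Q_{z,m}`. Since
`Q_{z,m} ⊆ Q_{z,K}`, every edge of the star joins two points of `Q_{z,K}`, whose diameter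
is `√d · K`. -/

/-- The edge sets over which `mstLength` takes its infimum. -/
structure IsSpanningTree {α : Type*} (ψ : Finset α) (E : Finset (Sym2 α)) : Prop where
  mem_of_mem_edge : ∀ e ∈ E, ∀ x ∈ e, x ∈ ψ
  reachable : ∀ x ∈ ψ, ∀ y ∈ ψ, (SimpleGraph.fromEdgeSet (E : Set (Sym2 α))).Reachable x y
  card_eq : E.card = ψ.card - 1

namespace IsSpanningTree

variable {α : Type*}

lemma singleton (x₀ : α) : IsSpanningTree {x₀} ∅ where
  mem_of_mem_edge := by simp
  reachable := by simp
  card_eq := by simp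

lemma disjoint_map_mkEmbedding {ψ S : Finset α} {E : Finset (Sym2 α)}
    (hE : IsSpanningTree ψ E) (hdisj : Disjoint ψ S) (x₀ : α) :
    Disjoint E (S.map (Sym2.mkEmbedding x₀)) := by
  refine Finset.disjoint_right.2 fun e he heE => ?_
  obtain ⟨p, hp, rfl⟩ := Finset.mem_map.1 he
  exact Finset.disjoint_right.1 hdisj hp (hE.mem_of_mem_edge _ heE p (Sym2.mem_mk_right x₀ p))

lemma union_star [DecidableEq α] {ψ S : Finset α} {E : Finset (Sym2 α)} {x₀ : α}
    (hE : IsSpanningTree ψ E) (hx₀ : x₀ ∈ ψ) (hdisj : Disjoint ψ S) :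
    IsSpanningTree (ψ ∪ S) (E ∪ S.map (Sym2.mkEmbedding x₀)) := by
  set G := SimpleGraph.fromEdgeSet ((E ∪ S.map (Sym2.mkEmbedding x₀) : Finset _) : Set (Sym2 α))
  have hreach : ∀ x ∈ ψ ∪ S, G.Reachable x x₀ := by
    intro x hx
    rcases Finset.mem_union.1 hx with hxψ | hxS
    · exact (hE.reachable x hxψ x₀ hx₀).mono
        (SimpleGraph.fromEdgeSet_mono (Finset.coe_subset.2 Finset.subset_union_left))
    · have hx₀x : x₀ ≠ x := fun h => Finset.disjoint_left.1 hdisj hx₀ (h ▸ hxS)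
      have hadj : G.Adj x₀ x :=
        ⟨Finset.mem_union_right _ (Finset.mem_map_of_mem _ hxS), hx₀x⟩
      exact hadj.symm.reachable
  refine ⟨?_, fun x hx y hy => (hreach x hx).trans (hreach y hy).symm, ?_⟩
  · intro e he x hx
    rcases Finset.mem_union.1 he with he | he
    · exact Finset.mem_union_left _ (hE.mem_of_mem_edge e he x hx)
    · obtain ⟨p, hp, rfl⟩ := Finset.mem_map.1 he
      rcases Sym2.mem_iff.1 hx with rfl | rfl
      · exact Finset.mem_union_left _ hx₀
      · exact Finset.mem_union_right _ hp
  · have hψ : 0 < ψ.card := Finset.card_pos.2 ⟨x₀, hx₀⟩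
    rw [Finset.card_union_of_disjoint (hE.disjoint_map_mkEmbedding hdisj x₀), hE.card_eq,
      Finset.card_map, Finset.card_union_of_disjoint hdisj]
    omega

lemma exists_of_finset [DecidableEq α] (ψ : Finset α) : ∃ E, IsSpanningTree ψ E := by
  rcases ψ.eq_empty_or_nonempty with rfl | ⟨x₀, hx₀⟩
  · exact ⟨∅, by simp, by simp, by simp⟩
  · have h := (singleton x₀).union_star (Finset.mem_singleton_self x₀)
      (Finset.disjoint_singleton_left.2 (Finset.notMem_erase x₀ ψ))
    rw [Finset.singleton_union, Finset.insert_erase hx₀] at h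
    exact ⟨_, h⟩

end IsSpanningTree

section MST

variable {d : ℕ}

lemma edgeLength_mk (a b : EuclideanSpace ℝ (Fin d)) : edgeLength s(a, b) = dist a b := rfl

lemma edgeLength_nonneg (e : Sym2 (EuclideanSpace ℝ (Fin d))) : 0 ≤ edgeLength e :=
  Sym2.inductionOn e fun a b => (edgeLength_mk a b).symm ▸ dist_nonneg

lemma mstLength_le {ψ : Finset (EuclideanSpace ℝ (Fin d))}
    {E : Finset (Sym2 (EuclideanSpace ℝ (Fin d)))} (hE : IsSpanningTree ψ E) :
    mstLength ψ ≤ ∑ e ∈ E, edgeLength e := by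
  refine csInf_le ⟨0, ?_⟩ ⟨E, hE.mem_of_mem_edge, hE.reachable, hE.card_eq, rfl⟩
  rintro _ ⟨E', -, -, -, rfl⟩
  exact Finset.sum_nonneg fun e _ => edgeLength_nonneg e

lemma le_mstLength {ψ : Finset (EuclideanSpace ℝ (Fin d))} {c : ℝ}
    (h : ∀ E, IsSpanningTree ψ E → c ≤ ∑ e ∈ E, edgeLength e) : c ≤ mstLength ψ := by
  obtain ⟨E, hE⟩ := IsSpanningTree.exists_of_finset ψ
  refine le_csInf ⟨_, E, hE.mem_of_mem_edge, hE.reachable, hE.card_eq, rfl⟩ ?_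
  rintro _ ⟨E', h₁, h₂, h₃, rfl⟩
  exact h E' ⟨h₁, h₂, h₃⟩

lemma mstLength_union_le {ψ S : Finset (EuclideanSpace ℝ (Fin d))}
    {x₀ : EuclideanSpace ℝ (Fin d)} {r : ℝ} (hx₀ : x₀ ∈ ψ) (hdisj : Disjoint ψ S)
    (hS : ∀ p ∈ S, dist x₀ p ≤ r) :
    mstLength (ψ ∪ S) ≤ mstLength ψ + r * S.card := by
  suffices mstLength (ψ ∪ S) - r * S.card ≤ mstLength ψ by linarith
  refine le_mstLength fun E hE => ?_
  have hstar : ∑ e ∈ S.map (Sym2.mkEmbedding x₀), edgeLength e ≤ r * S.card := by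
    rw [Finset.sum_map, mul_comm, ← nsmul_eq_mul]
    exact Finset.sum_le_card_nsmul S _ r hS
  calc mstLength (ψ ∪ S) - r * S.card
      ≤ ∑ e ∈ E ∪ S.map (Sym2.mkEmbedding x₀), edgeLength e - r * S.card := by
        gcongr
        exact mstLength_le (hE.union_star hx₀ hdisj)
    _ ≤ ∑ e ∈ E, edgeLength e := by
        rw [Finset.sum_union (hE.disjoint_map_mkEmbedding hdisj x₀)]
        linarith

end MST

section Cube

variable {d : ℕ}

lemma cube_mono {m K : ℝ} (hmK : m ≤ K) (z : EuclideanSpace ℝ (Fin d)) :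
    cube m z ⊆ cube K z :=
  fun _ hx i => (hx i).trans (by linarith)

lemma dist_le_of_mem_cube {K : ℝ} (hK : 0 ≤ K) {z x y : EuclideanSpace ℝ (Fin d)}
    (hx : x ∈ cube K z) (hy : y ∈ cube K z) : dist x y ≤ Real.sqrt d * K := by
  have hcoord : ∀ i, dist (x i) (y i) ^ 2 ≤ K ^ 2 := fun i => by
    have : |x i - y i| ≤ K := by
      calc |x i - y i| = |(x i - z i) - (y i - z i)| := by ring_nf
        _ ≤ |x i - z i| + |y i - z i| := abs_sub _ _
        _ ≤ K := by linarith [hx i, hy i]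
    rw [Real.dist_eq]
    exact pow_le_pow_left₀ (abs_nonneg _) this 2
  calc dist x y = Real.sqrt (∑ i, dist (x i) (y i) ^ 2) := EuclideanSpace.dist_eq x y
    _ ≤ Real.sqrt (∑ _i : Fin d, K ^ 2) :=
      Real.sqrt_le_sqrt (Finset.sum_le_sum fun i _ => hcoord i)
    _ = Real.sqrt d * K := by
      simp [Real.sqrt_mul (Nat.cast_nonneg d), Real.sqrt_sq hK]

end Cube

theorem mst_insertion_bound_general {d : ℕ} (m K : ℕ)
    (z : EuclideanSpace ℝ (Fin d))
    (φ ψin ψout : Finset (EuclideanSpace ℝ (Fin d)))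
    (hin : ∀ x, x ∈ ψin ↔ x ∈ φ ∧ x ∈ cube (m : ℝ) z)
    (hout : ∀ x, x ∈ ψout ↔ x ∈ φ ∧ x ∉ cube (m : ℝ) z)
    (hmK : m ≤ K)
    (hwit : ∃ x ∈ φ, x ∈ cube (K : ℝ) z ∧ x ∉ cube (m : ℝ) z) :
    mstLength φ ≤ mstLength ψout + Real.sqrt d * K * ψin.card := by
  obtain ⟨x₀, hx₀φ, hx₀K, hx₀m⟩ := hwit
  have hx₀ : x₀ ∈ ψout := (hout x₀).2 ⟨hx₀φ, hx₀m⟩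
  have hdisj : Disjoint ψout ψin :=
    Finset.disjoint_left.2 fun x hxo hxi => ((hout x).1 hxo).2 ((hin x).1 hxi).2
  have hφ : ψout ∪ ψin = φ := by
    ext x
    simp only [Finset.mem_union, hin, hout]
    tauto
  have hmK' : (m : ℝ) ≤ K := Nat.cast_le.2 hmK
  have hlen : ∀ p ∈ ψin, dist x₀ p ≤ Real.sqrt d * K := fun p hp =>
    dist_le_of_mem_cube (Nat.cast_nonneg K) hx₀K (cube_mono hmK' z ((hin p).1 hp).2)
  rw [← hφ]
  exact mstLength_union_le hx₀ hdisj hlen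

/-- Upper bound for the MST length after reinserting the points of a cube: if
`φ ⊆ Q_n`, `φ ⊄ Q_{z,m}`, `φ ∩ Q_{z,m} ≠ ∅` and `K ≥ m` is minimal with
`φ ∩ Q_{z,K} ⊄ Q_{z,m}`, then
`H(φ) ≤ H(φ \ Q_{z,m}) + √d · K · #(φ ∩ Q_{z,m})`. -/
theorem mst_insertion_bound {d : ℕ} (n m K : ℕ)
    (z : EuclideanSpace ℝ (Fin d))
    (φ ψin ψout : Finset (EuclideanSpace ℝ (Fin d)))
    (hφn : ∀ x ∈ φ, x ∈ cube (n : ℝ) (0 : EuclideanSpace ℝ (Fin d)))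
    (hin : ∀ x, x ∈ ψin ↔ x ∈ φ ∧ x ∈ cube (m : ℝ) z)
    (hout : ∀ x, x ∈ ψout ↔ x ∈ φ ∧ x ∉ cube (m : ℝ) z)
    (hnotsub : ∃ x ∈ φ, x ∉ cube (m : ℝ) z)
    (hne : ∃ x ∈ φ, x ∈ cube (m : ℝ) z)
    (hmK : m ≤ K)
    (hwit : ∃ x ∈ φ, x ∈ cube (K : ℝ) z ∧ x ∉ cube (m : ℝ) z)
    (hmin : ∀ k : ℕ, m ≤ k → k < K → ∀ x ∈ φ, x ∈ cube (k : ℝ) z → x ∈ cube (m : ℝ) z) :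
    mstLength φ ≤ mstLength ψout + Real.sqrt d * K * ψin.card :=
  mst_insertion_bound_general m K z φ ψin ψout hin hout hmK hwit
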